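/- arXiv:2311.03039 — 2 statements merged into one kernel-verified Lean document; each statement's English description precedes it below -/
import Mathlib

section
/- If the solution X(t) of the ODE dX_i/dt = (1/N) Σ_j p_{ij}(X)(X_j - X_i) exists on [0,T] and initially all X_i(0) lie in [m, M], then X_i(t) ∈ [m, M] for all t ∈ [0,T] and all i. -/
/-!
The excess energy `g t = ∑ᵢ ((Xᵢ t - M)⁺)²` vanishes at `t = 0`. An agent above `M` can only be
pulled upwards by agents above `M`, so its velocity is at most `(1/N) ∑ⱼ (Xⱼ - M)⁺`; with
Cauchy–Schwarz this gives `g' ≤ 2 g`, and Grönwall's inequality forces `g ≡ 0`. The lower bound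
is the upper bound for `-X`.
-/

open Set
open scoped NNReal Topology

theorem hasDerivAt_posPart_sq (x : ℝ) : HasDerivAt (fun y : ℝ => y⁺ ^ 2) (2 * x⁺) x := by
  rcases lt_trichotomy x 0 with hx | rfl | hx
  · rw [posPart_of_nonpos hx.le, mul_zero]
    refine (hasDerivAt_const x 0).congr_of_eventuallyEq ?_
    filter_upwards [eventually_lt_nhds hx] with y hy
    simp [posPart_of_nonpos (le_of_lt hy)]
  · have hsq : (fun y : ℝ => y⁺ ^ 2) =O[𝓝 0] fun y => y ^ 2 :=
      Asymptotics.IsBigO.of_bound 1 (Filter.Eventually.of_forall fun y => by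
        rcases le_total y 0 with hy | hy <;>
          simp [posPart_of_nonpos, posPart_of_nonneg, hy, sq_nonneg])
    simpa [hasDerivAt_iff_isLittleO_nhds_zero] using
      hsq.trans_isLittleO (Asymptotics.isLittleO_pow_id one_lt_two)
  · rw [posPart_of_nonneg hx.le]
    refine ((hasDerivAt_pow 2 x).congr_of_eventuallyEq ?_).congr_deriv (by ring)
    filter_upwards [eventually_gt_nhds hx] with y hy
    simp [posPart_of_nonneg (le_of_lt hy)]

theorem sum_mul_sub_le_sum_posPart_sub {ι : Type*} [Fintype ι] {w a : ι → ℝ}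
    (hw : ∀ j, w j ∈ Icc (0 : ℝ) 1) {c M : ℝ} (hc : M < c) :
    ∑ j, w j * (a j - c) ≤ ∑ j, (a j - M)⁺ := by
  refine Finset.sum_le_sum fun j _ => ?_
  rcases le_total (a j) c with hj | hj
  · exact (mul_nonpos_of_nonneg_of_nonpos (hw j).1 (by linarith)).trans (posPart_nonneg _)
  · calc w j * (a j - c) ≤ a j - c := mul_le_of_le_one_left (by linarith) (hw j).2
      _ ≤ (a j - M)⁺ := (by linarith : a j - c ≤ a j - M).trans (le_posPart _)

theorem le_of_hasDerivAt_le_mul_sum_posPart {ι : Type*} [Fintype ι] {x v : ℝ → ι → ℝ}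
    {a b K M : ℝ} (hK : 0 ≤ K)
    (hx : ∀ t ∈ Icc a b, ∀ i, HasDerivAt (fun s => x s i) (v t i) t)
    (hv : ∀ t ∈ Ico a b, ∀ i, M < x t i → v t i ≤ K * ∑ j, (x t j - M)⁺)
    (ha : ∀ i, x a i ≤ M) :
    ∀ t ∈ Icc a b, ∀ i, x t i ≤ M := by
  set g : ℝ → ℝ := fun t => ∑ i, (x t i - M)⁺ ^ 2
  have hg : ∀ t ∈ Icc a b, HasDerivAt g (∑ i, 2 * (x t i - M)⁺ * v t i) t := fun t ht =>
    HasDerivAt.fun_sum fun i _ => (hasDerivAt_posPart_sq _).comp t ((hx t ht i).sub_const M)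
  have hbound : ∀ t ∈ Ico a b,
      ∑ i, 2 * (x t i - M)⁺ * v t i ≤ 2 * K * Fintype.card ι * g t + 0 := by
    intro t ht
    have hterm : ∀ i, (x t i - M)⁺ * v t i ≤ (x t i - M)⁺ * (K * ∑ j, (x t j - M)⁺) := by
      intro i
      rcases le_or_gt (x t i) M with hi | hi
      · simp [posPart_of_nonpos (sub_nonpos.mpr hi)]
      · exact mul_le_mul_of_nonneg_left (hv t ht i hi) (posPart_nonneg _)
    calc ∑ i, 2 * (x t i - M)⁺ * v t i
        ≤ ∑ i, 2 * ((x t i - M)⁺ * (K * ∑ j, (x t j - M)⁺)) :=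
          Finset.sum_le_sum fun i _ => by rw [mul_assoc]; linarith [hterm i]
      _ = 2 * K * (∑ i, (x t i - M)⁺) ^ 2 := by rw [← Finset.mul_sum, ← Finset.sum_mul]; ring
      _ ≤ 2 * K * (Fintype.card ι * g t) := by
          gcongr
          simpa using sq_sum_le_card_mul_sum_sq (s := Finset.univ) (f := fun i => (x t i - M)⁺)
      _ = 2 * K * Fintype.card ι * g t + 0 := by ring
  have hg_nonpos : ∀ t ∈ Icc a b, g t ≤ 0 := by
    intro t ht
    have h := le_gronwallBound_of_liminf_deriv_right_le
      (fun t ht => (hg t ht).continuousAt.continuousWithinAt)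
      (fun t ht r hr => by
        simpa only [slope, vsub_eq_sub, smul_eq_mul] using
          (hg t (Ico_subset_Icc_self ht)).hasDerivWithinAt.liminf_right_slope_le hr)
      (show g a ≤ 0 by simp [g, posPart_of_nonpos, ha]) hbound t ht
    rwa [gronwallBound_ε0_δ0] at h
  intro t ht i
  have hi : (x t i - M)⁺ ^ 2 ≤ 0 :=
    (Finset.single_le_sum (fun j _ => sq_nonneg ((x t j - M)⁺)) (Finset.mem_univ i)).trans
      (hg_nonpos t ht)
  linarith [le_posPart (x t i - M), (sq_nonpos_iff _).mp hi]

theorem stmt7_general (N : ℕ) (T m M : ℝ)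
    (p : Fin N → Fin N → (Fin N → ℝ) → ℝ)
    (hp01 : ∀ i j x, p i j x ∈ Icc (0 : ℝ) 1)
    (X : ℝ → Fin N → ℝ)
    (hX : ∀ t ∈ Icc 0 T, ∀ i, HasDerivAt (fun s => X s i)
      ((1 / (N : ℝ)) * ∑ j, p i j (X t) * (X t j - X t i)) t)
    (hX0 : ∀ i, X 0 i ∈ Icc m M) :
    ∀ t ∈ Icc 0 T, ∀ i, X t i ∈ Icc m M := by
  have hN : (0 : ℝ) ≤ 1 / N := by positivity
  have hupper := le_of_hasDerivAt_le_mul_sum_posPart hN hX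
    (fun t _ i hi => mul_le_mul_of_nonneg_left
      (sum_mul_sub_le_sum_posPart_sub (hp01 i · (X t)) hi) hN)
    (fun i => (hX0 i).2)
  have hlower := le_of_hasDerivAt_le_mul_sum_posPart (x := fun t i => -X t i) (M := -m) hN
    (fun t ht i => (hX t ht i).neg)
    (fun t _ i hi => by
      have h := mul_le_mul_of_nonneg_left
        (sum_mul_sub_le_sum_posPart_sub (a := fun j => -X t j) (hp01 i · (X t)) hi) hN
      refine (Eq.le ?_).trans h
      rw [← mul_neg, ← Finset.sum_neg_distrib]
      simp only [neg_sub_neg, mul_sub, neg_sub])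
    (fun i => neg_le_neg (hX0 i).1)
  exact fun t ht i => ⟨neg_le_neg_iff.mp (hlower t ht i), hupper t ht i⟩

/-- If `X` solves the ODE `dX_i/dt = (1/N) ∑_j p i j (X) (X_j - X_i)` on `[0,T]` with
`p i j` Lipschitz taking values in `[0,1]`, and initially all `X_i(0) ∈ [m,M]`, then
`X_i(t) ∈ [m,M]` for all `t ∈ [0,T]` and all `i`. -/
theorem stmt7 (N : ℕ) (T m M : ℝ) (hT : 0 ≤ T)
    (p : Fin N → Fin N → (Fin N → ℝ) → ℝ)
    (hp01 : ∀ i j x, p i j x ∈ Icc (0 : ℝ) 1)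
    (hpLip : ∀ i j, ∃ K : ℝ≥0, LipschitzWith K (p i j))
    (X : ℝ → Fin N → ℝ)
    (hX : ∀ t ∈ Icc 0 T, ∀ i, HasDerivAt (fun s => X s i)
      ((1 / (N : ℝ)) * ∑ j, p i j (X t) * (X t j - X t i)) t)
    (hX0 : ∀ i, X 0 i ∈ Icc m M) :
    ∀ t ∈ Icc 0 T, ∀ i, X t i ∈ Icc m M :=
  stmt7_general N T m M p hp01 X hX hX0
end

section
/- Let φ : [0,∞) → [0,1] be Lipschitz with constant L, let η be a real random variable, and fix x_i, x_j with |x_i|, |x_j| ≤ R. Then |E[(x_j - x_i + η)·φ(|x_j - x_i + η|)] - (x_j - x_i)·φ(|x_j - x_i|)| ≤ (2RL + 1)·E[|η|]. -/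
open MeasureTheory Set
open scoped NNReal

/-!
With `g t = φ |t|` and `a = x_j - x_i`, the map `t ↦ t g(t)` satisfies
`|(a + e) g(a + e) - a g(a)| ≤ |e| |g(a + e)| + |a| |g(a + e) - g(a)| ≤ (1 + L |a|) |e|`,
since `|g| ≤ 1` and `g` is `L`-Lipschitz. Taking expectations and using `|a| ≤ 2R` gives the bound.
-/

theorem LipschitzOnWith.comp_abs {φ : ℝ → ℝ} {L : ℝ≥0} (hφ : LipschitzOnWith L φ (Ici 0)) :
    LipschitzWith L (fun t => φ |t|) := by
  have habs : LipschitzOnWith 1 (fun t : ℝ => |t|) univ :=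
    lipschitzOnWith_univ.mpr lipschitzWith_one_norm
  simpa [Function.comp_def] using
    (lipschitzOnWith_univ.mp (hφ.comp habs fun t _ => abs_nonneg t) :)

theorem abs_mul_comp_add_sub_le {g : ℝ → ℝ} {L : ℝ≥0} (hgL : LipschitzWith L g)
    (hg1 : ∀ t, |g t| ≤ 1) (a e : ℝ) :
    |(a + e) * g (a + e) - a * g a| ≤ (L * |a| + 1) * |e| := by
  have hlip : |g (a + e) - g a| ≤ L * |e| := by
    simpa [Real.dist_eq] using hgL.dist_le_mul (a + e) a
  calc |(a + e) * g (a + e) - a * g a|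
      = |e * g (a + e) + a * (g (a + e) - g a)| := by ring_nf
    _ ≤ |e| * |g (a + e)| + |a| * |g (a + e) - g a| := by
        rw [← abs_mul, ← abs_mul]; exact abs_add_le _ _
    _ ≤ |e| * 1 + |a| * (L * |e|) := by gcongr; exact hg1 _
    _ = (L * |a| + 1) * |e| := by ring

theorem norm_integral_comp_add_sub_le {Ω E F : Type*} [MeasurableSpace Ω] {μ : Measure Ω}
    [IsProbabilityMeasure μ] [NormedAddCommGroup E] [NormedAddCommGroup F] [NormedSpace ℝ F]
    [CompleteSpace F] {f : E → F} (hf : Continuous f) {a : E} {C : ℝ}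
    (hfa : ∀ e, ‖f (a + e) - f a‖ ≤ C * ‖e‖)
    {η : Ω → E} (hη : Integrable η μ) :
    ‖(∫ ω, f (a + η ω) ∂μ) - f a‖ ≤ C * ∫ ω, ‖η ω‖ ∂μ := by
  have hbound : Integrable (fun ω => C * ‖η ω‖) μ := hη.norm.const_mul C
  have hdiff : Integrable (fun ω => f (a + η ω) - f a) μ :=
    hbound.mono' (by fun_prop) (.of_forall fun ω => hfa (η ω))
  have hcomp : Integrable (fun ω => f (a + η ω)) μ :=
    (hdiff.add (integrable_const (f a))).congr (.of_forall fun ω => sub_add_cancel _ _)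
  calc ‖(∫ ω, f (a + η ω) ∂μ) - f a‖
      = ‖∫ ω, (f (a + η ω) - f a) ∂μ‖ := by
        rw [integral_sub hcomp (integrable_const _), integral_const, probReal_univ, one_smul]
    _ ≤ ∫ ω, ‖f (a + η ω) - f a‖ ∂μ := norm_integral_le_integral_norm _
    _ ≤ ∫ ω, C * ‖η ω‖ ∂μ := integral_mono hdiff.norm hbound fun ω => hfa (η ω)
    _ = C * ∫ ω, ‖η ω‖ ∂μ := integral_const_mul _ _

theorem stmt12_general {Ω : Type*} [MeasurableSpace Ω] (μ : Measure Ω) [IsProbabilityMeasure μ]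
    (φ : ℝ → ℝ) (L : ℝ≥0)
    (hφ01 : ∀ t ∈ Ici (0 : ℝ), φ t ∈ Icc (0 : ℝ) 1)
    (hφL : LipschitzOnWith L φ (Ici 0))
    (η : Ω → ℝ) (hη : Integrable η μ)
    (R xi xj : ℝ) (hxi : |xi| ≤ R) (hxj : |xj| ≤ R) :
    |(∫ ω, (xj - xi + η ω) * φ (abs (xj - xi + η ω)) ∂μ) - (xj - xi) * φ (abs (xj - xi))|
      ≤ (2 * R * L + 1) * ∫ ω, |η ω| ∂μ := by
  have hgL := hφL.comp_abs
  have hg1 : ∀ t : ℝ, |φ (abs t)| ≤ 1 := fun t =>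
    abs_le.mpr ⟨by linarith [(hφ01 _ (abs_nonneg t)).1], (hφ01 _ (abs_nonneg t)).2⟩
  have hdist : |xj - xi| ≤ 2 * R := by linarith [abs_sub xj xi]
  calc _ ≤ (L * |xj - xi| + 1) * ∫ ω, |η ω| ∂μ :=
        norm_integral_comp_add_sub_le (f := fun t => t * φ |t|) (continuous_id.mul hgL.continuous)
          (abs_mul_comp_add_sub_le hgL hg1 _) hη
    _ ≤ (2 * R * L + 1) * ∫ ω, |η ω| ∂μ :=
        mul_le_mul_of_nonneg_right (by nlinarith [L.coe_nonneg])
          (integral_nonneg fun ω => abs_nonneg _)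

/-- Ambiguity noise drift estimate: if `φ : [0,∞) → [0,1]` is Lipschitz with constant `L`,
`η` an integrable real random variable, and `|x_i|, |x_j| ≤ R`, then
`|E[(x_j - x_i + η) φ(|x_j - x_i + η|)] - (x_j - x_i) φ(|x_j - x_i|)| ≤ (2RL + 1) E[|η|]`. -/
theorem stmt12 {Ω : Type*} [MeasurableSpace Ω] (μ : Measure Ω) [IsProbabilityMeasure μ]
    (φ : ℝ → ℝ) (L : ℝ≥0)
    (hφ01 : ∀ t ∈ Ici (0 : ℝ), φ t ∈ Icc (0 : ℝ) 1)
    (hφL : LipschitzOnWith L φ (Ici 0))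
    (η : Ω → ℝ) (hη : Integrable η μ)
    (R xi xj : ℝ) (hR : 0 < R) (hxi : |xi| ≤ R) (hxj : |xj| ≤ R) :
    |(∫ ω, (xj - xi + η ω) * φ (abs (xj - xi + η ω)) ∂μ) - (xj - xi) * φ (abs (xj - xi))|
      ≤ (2 * R * L + 1) * ∫ ω, |η ω| ∂μ :=
  stmt12_general μ φ L hφ01 hφL η hη R xi xj hxi hxj
end
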